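/- For every λ > 0, K ≥ 1, α ∈ [1,2], and integer m ≥ 1, the function H(r) = f_α(r^m) + r·(1+r^m)^{α-1}/(1-r^m)^{α+1} + λ·((2K/(K+1))·f_α(r) - r) - 1/(2α) is strictly increasing on (0,1), negative at 0, tends to +∞ as r → 1⁻, and has a unique zero in (0,1). -/

import Mathlib

/-!
With `u(x) = (1 + x)/(1 - x)`, which is increasing on `(-∞, 1)`, `f_α = (u^α - 1)/(2α)` is
increasing, and `f_α' = u^(α-1)/(1 - x)^2 ≥ 1` on `[0, 1)` when `α ≥ 1`; hence `c f_α(r) - r` is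
monotone for `c ≥ 1`. The middle term of `H` has an increasing numerator and a decreasing
denominator, so `H` is strictly increasing. `H(0) = -1/(2α)`, while
`H(r) ≥ f_α(r^m) - λ - 1/(2α) → ∞` as `r → 1⁻`; continuity and the intermediate value theorem give
the zero, strict monotonicity its uniqueness.
-/

open Real Set Filter Topology

lemma one_add_div_one_sub_pos {x : ℝ} (hx : x ∈ Ioo (-1) 1) : 0 < (1 + x) / (1 - x) :=
  div_pos (by linarith [hx.1]) (by linarith [hx.2])

lemma one_le_one_add_div_one_sub {x : ℝ} (h0 : 0 ≤ x) (h1 : x < 1) : 1 ≤ (1 + x) / (1 - x) := by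
  rw [le_div_iff₀ (by linarith)]
  linarith

lemma strictMonoOn_one_add_div_one_sub : StrictMonoOn (fun x : ℝ => (1 + x) / (1 - x)) (Iio 1) := by
  intro a ha b hb hab
  simp only [mem_Iio] at ha hb
  rw [div_lt_div_iff₀ (by linarith) (by linarith)]
  nlinarith

lemma continuousOn_one_add_div_one_sub : ContinuousOn (fun x : ℝ => (1 + x) / (1 - x)) (Iio 1) :=
  (continuousOn_const.add continuousOn_id).div (continuousOn_const.sub continuousOn_id)
    fun _ hx => (sub_pos.2 hx).ne'

lemma tendsto_one_add_div_one_sub : Tendsto (fun x : ℝ => (1 + x) / (1 - x)) (𝓝[<] 1) atTop := by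
  have hnum : Tendsto (fun x : ℝ => 1 + x) (𝓝[<] 1) (𝓝 2) :=
    tendsto_nhdsWithin_of_tendsto_nhds
      ((continuous_const.add continuous_id).tendsto' 1 2 (by norm_num))
  have hden : Tendsto (fun x : ℝ => 1 - x) (𝓝[<] 1) (𝓝[>] 0) := by
    refine tendsto_nhdsWithin_of_tendsto_nhds_of_eventually_within _ ?_ ?_
    · exact tendsto_nhdsWithin_of_tendsto_nhds
        ((continuous_const.sub continuous_id).tendsto' 1 0 (by norm_num))
    · filter_upwards [self_mem_nhdsWithin] with x (hx : x < 1) using sub_pos.2 hx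
  simpa [div_eq_mul_inv] using hnum.pos_mul_atTop two_pos hden.inv_tendsto_nhdsGT_zero

noncomputable def fAlpha (α x : ℝ) : ℝ := (1 / (2 * α)) * (((1 + x) / (1 - x)) ^ α - 1)

lemma fAlpha_zero (α : ℝ) : fAlpha α 0 = 0 := by simp [fAlpha]

lemma strictMonoOn_fAlpha {α : ℝ} (hα : 0 < α) : StrictMonoOn (fAlpha α) (Ioo (-1) 1) := by
  intro a ha b hb hab
  have hu := strictMonoOn_one_add_div_one_sub ha.2 hb.2 hab
  have := rpow_lt_rpow (one_add_div_one_sub_pos ha).le hu hα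
  unfold fAlpha
  gcongr

lemma fAlpha_nonneg {α x : ℝ} (hα : 0 < α) (h0 : 0 ≤ x) (h1 : x < 1) : 0 ≤ fAlpha α x := by
  rw [← fAlpha_zero α]
  exact (strictMonoOn_fAlpha hα).monotoneOn ⟨by norm_num, by norm_num⟩ ⟨by linarith, h1⟩ h0

lemma continuousOn_fAlpha (α : ℝ) : ContinuousOn (fAlpha α) (Ioo (-1) 1) :=
  continuousOn_const.mul (((continuousOn_one_add_div_one_sub.mono fun _ hx => hx.2).rpow_const
    fun _ hx => Or.inl (one_add_div_one_sub_pos hx).ne').sub continuousOn_const)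

lemma hasDerivAt_fAlpha {α x : ℝ} (hα : α ≠ 0) (hx : x ∈ Ioo (-1) 1) :
    HasDerivAt (fAlpha α) (((1 + x) / (1 - x)) ^ (α - 1) / (1 - x) ^ 2) x := by
  have hx1 : 1 - x ≠ 0 := (sub_pos.2 hx.2).ne'
  have hu : HasDerivAt (fun x : ℝ => (1 + x) / (1 - x)) (2 / (1 - x) ^ 2) x :=
    (((hasDerivAt_id' x).const_add 1).div ((hasDerivAt_id' x).const_sub 1) hx1).congr_deriv
      (by ring)
  refine (((hu.rpow_const (p := α) (Or.inl (one_add_div_one_sub_pos hx).ne')).sub_const 1).const_mul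
    (1 / (2 * α))).congr_deriv ?_
  field_simp

lemma one_le_deriv_fAlpha {α x : ℝ} (hα : 1 ≤ α) (h0 : 0 ≤ x) (h1 : x < 1) :
    1 ≤ ((1 + x) / (1 - x)) ^ (α - 1) / (1 - x) ^ 2 := by
  have hpow : 1 ≤ ((1 + x) / (1 - x)) ^ (α - 1) :=
    one_le_rpow (one_le_one_add_div_one_sub h0 h1) (by linarith)
  rw [le_div_iff₀ (by nlinarith)]
  nlinarith

lemma monotoneOn_fAlpha_sub_id {α : ℝ} (hα : 1 ≤ α) :
    MonotoneOn (fun x => fAlpha α x - x) (Ico 0 1) := by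
  have hsub : Ico (0 : ℝ) 1 ⊆ Ioo (-1) 1 := Ico_subset_Ioo_left (by norm_num)
  have hderiv : ∀ x ∈ Ioo (0 : ℝ) 1, HasDerivAt (fun x => fAlpha α x - x)
      (((1 + x) / (1 - x)) ^ (α - 1) / (1 - x) ^ 2 - 1) x := fun x hx =>
    (hasDerivAt_fAlpha (by linarith) (hsub (Ioo_subset_Ico_self hx))).sub (hasDerivAt_id x)
  refine monotoneOn_of_deriv_nonneg (convex_Ico 0 1)
    (((continuousOn_fAlpha α).mono hsub).sub continuousOn_id) ?_ ?_
  · rw [interior_Ico]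
    exact fun x hx => (hderiv x hx).differentiableAt.differentiableWithinAt
  · rw [interior_Ico]
    intro x hx
    rw [(hderiv x hx).deriv, sub_nonneg]
    exact one_le_deriv_fAlpha hα hx.1.le hx.2

lemma tendsto_fAlpha {α : ℝ} (hα : 0 < α) : Tendsto (fAlpha α) (𝓝[<] 1) atTop :=
  (tendsto_atTop_add_const_right _ (-1)
    ((tendsto_rpow_atTop hα).comp tendsto_one_add_div_one_sub)).const_mul_atTop (by positivity)

lemma pow_mem_Ico_zero_one {r : ℝ} {m : ℕ} (hm : m ≠ 0) (hr : r ∈ Ico 0 1) : r ^ m ∈ Ico 0 1 :=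
  ⟨pow_nonneg hr.1 m, pow_lt_one₀ hr.1 hr.2 hm⟩

lemma tendsto_pow_nhdsLT_one {m : ℕ} (hm : m ≠ 0) :
    Tendsto (fun r : ℝ => r ^ m) (𝓝[<] 1) (𝓝[<] 1) := by
  refine tendsto_nhdsWithin_of_tendsto_nhds_of_eventually_within _
    (tendsto_nhdsWithin_of_tendsto_nhds ((continuous_pow m).tendsto' 1 1 (one_pow m))) ?_
  filter_upwards [Ioo_mem_nhdsLT zero_lt_one] with r hr
  exact pow_lt_one₀ hr.1.le hr.2 hm

lemma strictMonoOn_mul_one_add_pow_div_one_sub_pow {α : ℝ} {m : ℕ} (hα : 1 ≤ α) (hm : m ≠ 0) :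
    StrictMonoOn (fun r : ℝ => r * (1 + r ^ m) ^ (α - 1) / (1 - r ^ m) ^ (α + 1)) (Ico 0 1) := by
  intro a ha b hb hab
  obtain ⟨ham0, ham1⟩ := pow_mem_Ico_zero_one hm ha
  obtain ⟨hbm0, hbm1⟩ := pow_mem_Ico_zero_one hm hb
  have hpow : a ^ m ≤ b ^ m := pow_le_pow_left₀ ha.1 hab.le m
  have hnum : a * (1 + a ^ m) ^ (α - 1) < b * (1 + b ^ m) ^ (α - 1) :=
    mul_lt_mul hab (rpow_le_rpow (by linarith) (by linarith) (by linarith))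
      (rpow_pos_of_pos (by linarith) _) (by linarith [ha.1])
  refine div_lt_div₀ hnum (rpow_le_rpow (by linarith) (by linarith) (by linarith))
    (mul_nonneg (by linarith [ha.1]) (rpow_nonneg (by linarith) _))
    (rpow_pos_of_pos (by linarith) _)

/-- `H`, with `c` standing for `2K/(K+1)`. -/
noncomputable def Hfn (c α lam : ℝ) (m : ℕ) (r : ℝ) : ℝ :=
  fAlpha α (r ^ m) + r * (1 + r ^ m) ^ (α - 1) / (1 - r ^ m) ^ (α + 1)
    + lam * (c * fAlpha α r - r) - 1 / (2 * α)

section Hfn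

variable {c α lam : ℝ} {m : ℕ}

lemma Hfn_zero (hm : m ≠ 0) : Hfn c α lam m 0 = -(1 / (2 * α)) := by
  simp [Hfn, zero_pow hm, fAlpha_zero]

lemma strictMonoOn_Hfn (hc : 1 ≤ c) (hα : 1 ≤ α) (hlam : 0 ≤ lam) (hm : m ≠ 0) :
    StrictMonoOn (Hfn c α lam m) (Ico 0 1) := by
  have hsub : Ico (0 : ℝ) 1 ⊆ Ioo (-1) 1 := Ico_subset_Ioo_left (by norm_num)
  intro a ha b hb hab
  have hf := (strictMonoOn_fAlpha (α := α) (by linarith)).monotoneOn (hsub ha) (hsub hb) hab.le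
  have hfpow := strictMonoOn_fAlpha (α := α) (by linarith) (hsub (pow_mem_Ico_zero_one hm ha))
    (hsub (pow_mem_Ico_zero_one hm hb)) (pow_lt_pow_left₀ hab ha.1 hm)
  have hmid := strictMonoOn_mul_one_add_pow_div_one_sub_pow hα hm ha hb hab
  have hsubid := monotoneOn_fAlpha_sub_id hα ha hb hab.le
  have hlin : c * fAlpha α a - a ≤ c * fAlpha α b - b := by
    nlinarith [mul_le_mul_of_nonneg_left hf (sub_nonneg.2 hc)]
  have := mul_le_mul_of_nonneg_left hlin hlam
  simp only [Hfn]
  linarith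

lemma continuousOn_Hfn (hm : m ≠ 0) : ContinuousOn (Hfn c α lam m) (Ico 0 1) := by
  have hsub : Ico (0 : ℝ) 1 ⊆ Ioo (-1) 1 := Ico_subset_Ioo_left (by norm_num)
  have hpow : ContinuousOn (fun r : ℝ => r ^ m) (Ico 0 1) := (continuous_pow m).continuousOn
  have hden : ∀ r ∈ Ico (0 : ℝ) 1, 0 < 1 - r ^ m := fun r hr =>
    sub_pos.2 (pow_mem_Ico_zero_one hm hr).2
  have hnum : ∀ r ∈ Ico (0 : ℝ) 1, 0 < 1 + r ^ m := fun r hr =>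
    add_pos_of_pos_of_nonneg one_pos (pow_nonneg hr.1 m)
  exact ((((continuousOn_fAlpha α).comp hpow fun r hr => hsub (pow_mem_Ico_zero_one hm hr)).add
    ((continuousOn_id.mul ((continuousOn_const.add hpow).rpow_const fun r hr =>
      Or.inl (hnum r hr).ne')).div
      ((continuousOn_const.sub hpow).rpow_const fun r hr => Or.inl (hden r hr).ne')
      fun r hr => (rpow_pos_of_pos (hden r hr) _).ne')).add
    (continuousOn_const.mul ((continuousOn_const.mul ((continuousOn_fAlpha α).mono hsub)).sub
      continuousOn_id))).sub continuousOn_const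

lemma tendsto_Hfn (hc : 0 ≤ c) (hα : 0 < α) (hlam : 0 ≤ lam) (hm : m ≠ 0) :
    Tendsto (Hfn c α lam m) (𝓝[<] 1) atTop := by
  have hlower : ∀ r ∈ Ico (0 : ℝ) 1, fAlpha α (r ^ m) + (-lam - 1 / (2 * α)) ≤ Hfn c α lam m r := by
    intro r hr
    obtain ⟨hrm0, hrm1⟩ := pow_mem_Ico_zero_one hm hr
    have hmid : 0 ≤ r * (1 + r ^ m) ^ (α - 1) / (1 - r ^ m) ^ (α + 1) :=
      div_nonneg (mul_nonneg hr.1 (rpow_nonneg (by linarith) _)) (rpow_nonneg (by linarith) _)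
    have hlin : -1 ≤ c * fAlpha α r - r := by
      nlinarith [mul_nonneg hc (fAlpha_nonneg hα hr.1 hr.2), hr.2]
    have := mul_le_mul_of_nonneg_left hlin hlam
    simp only [Hfn]
    linarith
  refine tendsto_atTop_mono' _ ?_ (tendsto_atTop_add_const_right _ (-lam - 1 / (2 * α))
    ((tendsto_fAlpha hα).comp (tendsto_pow_nhdsLT_one hm)))
  filter_upwards [Ico_mem_nhdsLT zero_lt_one] with r hr using hlower r hr

end Hfn

lemma existsUnique_eq_zero_of_strictMonoOn {g : ℝ → ℝ} {a b : ℝ} (hab : a < b)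
    (hcont : ContinuousOn g (Ico a b)) (hmono : StrictMonoOn g (Ico a b)) (ha : g a < 0)
    (hb : Tendsto g (𝓝[<] b) atTop) : ∃! r, r ∈ Ioo a b ∧ g r = 0 := by
  obtain ⟨r₀, hr₀pos, hr₀⟩ := ((hb.eventually_gt_atTop 0).and (Ioo_mem_nhdsLT hab)).exists
  obtain ⟨r, hr, hr0⟩ := intermediate_value_Ioo hr₀.1.le
    (hcont.mono (Icc_subset_Ico_right hr₀.2)) ⟨ha, hr₀pos⟩
  have hrmem : r ∈ Ioo a b := ⟨hr.1, hr.2.trans hr₀.2⟩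
  exact ⟨r, ⟨hrmem, hr0⟩, fun y hy => hmono.injOn (Ioo_subset_Ico_self hy.1)
    (Ioo_subset_Ico_self hrmem) (hy.2.trans hr0.symm)⟩

/-- Monotonicity, sign at `0`, divergence at `1⁻`, and unique zero in `(0,1)` of
`H(r) = f_α(r^m) + r(1+r^m)^{α-1}/(1-r^m)^{α+1} + λ((2K/(K+1)) f_α(r) - r) - 1/(2α)`. -/
theorem stmt17 (K α lam : ℝ) (hK : 1 ≤ K) (hα : α ∈ Set.Icc (1:ℝ) 2) (hlam : 0 < lam)
    (m : ℕ) (hm : 1 ≤ m)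
    (f H : ℝ → ℝ)
    (hf : ∀ r, f r = (1 / (2 * α)) * (((1 + r) / (1 - r)) ^ α - 1))
    (hH : ∀ r, H r = f (r ^ m) + r * (1 + r ^ m) ^ (α - 1) / (1 - r ^ m) ^ (α + 1)
      + lam * ((2 * K / (K + 1)) * f r - r) - 1 / (2 * α)) :
    StrictMonoOn H (Set.Ioo (0:ℝ) 1) ∧ H 0 < 0 ∧
      Filter.Tendsto H (nhdsWithin 1 (Set.Iio (1:ℝ))) Filter.atTop ∧
      (∃! r, r ∈ Set.Ioo (0:ℝ) 1 ∧ H r = 0) := by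
  obtain rfl : f = fAlpha α := funext hf
  obtain rfl : H = Hfn (2 * K / (K + 1)) α lam m := funext hH
  have hα1 : 1 ≤ α := hα.1
  have hm0 : m ≠ 0 := by omega
  have hc : 1 ≤ 2 * K / (K + 1) := by rw [le_div_iff₀ (by linarith)]; linarith
  have hmono := strictMonoOn_Hfn hc hα1 hlam.le hm0
  have hzero : Hfn (2 * K / (K + 1)) α lam m 0 < 0 := by
    rw [Hfn_zero hm0, neg_neg_iff_pos]; positivity
  have htend := tendsto_Hfn (zero_le_one.trans hc) (zero_lt_one.trans_le hα1) hlam.le hm0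
  exact ⟨hmono.mono Ioo_subset_Ico_self, hzero, htend,
    existsUnique_eq_zero_of_strictMonoOn zero_lt_one (continuousOn_Hfn hm0) hmono hzero htend⟩
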